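/- Let σ > 0 and μ ∈ ℝ, and let f and g be the Gaussian densities of N(0,σ²) and N(μ,σ²). Then the total variation distance satisfies the two-sided bound 1 − e^{−μ²/(8σ²)} ≤ ‖f − g‖_TV ≤ √2 · (1 − e^{−μ²/(8σ²)})^{1/2}. Consequently, for fixed ε ∈ (0,1) and any sequence σ_k → 0 with μ_k = σ_k·√(−8·log(1−ε²)), we have ‖f_k − g_k‖_TV ∈ [ε², √2 ε] for all k, where f_k, g_k are the densities of N(0,σ_k²) and N(μ_k,σ_k²). -/

import Mathlib

open MeasureTheory

/-- The Gaussian density of `N(μ,σ²)`. -/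
noncomputable def gdens (μ σ x : ℝ) : ℝ :=
  (σ * Real.sqrt (2 * Real.pi))⁻¹ * Real.exp (-(x - μ) ^ 2 / (2 * σ ^ 2))

section aux

open Real

lemma gdens_eq (μ σ : ℝ) (hσ : 0 < σ) :
    gdens μ σ = ProbabilityTheory.gaussianPDFReal μ ⟨σ ^ 2, sq_nonneg σ⟩ := by
  funext x
  simp only [gdens, ProbabilityTheory.gaussianPDFReal, NNReal.coe_mk]
  show (σ * Real.sqrt (2 * π))⁻¹ * Real.exp (-(x - μ) ^ 2 / (2 * σ ^ 2))
    = (Real.sqrt (2 * π * σ ^ 2))⁻¹ * Real.exp (-(x - μ) ^ 2 / (2 * σ ^ 2))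
  rw [Real.sqrt_mul (by positivity : (0:ℝ) ≤ 2 * π), Real.sqrt_sq hσ.le, mul_comm σ]

lemma gdens_pos {σ : ℝ} (hσ : 0 < σ) (μ x : ℝ) : 0 < gdens μ σ x := by
  unfold gdens
  positivity

lemma integrable_gdens {σ : ℝ} (hσ : 0 < σ) (μ : ℝ) : Integrable (gdens μ σ) := by
  rw [gdens_eq μ σ hσ]
  exact ProbabilityTheory.integrable_gaussianPDFReal μ _

lemma integral_gdens {σ : ℝ} (hσ : 0 < σ) (μ : ℝ) : ∫ x : ℝ, gdens μ σ x = 1 := by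
  rw [gdens_eq μ σ hσ]
  exact ProbabilityTheory.integral_gaussianPDFReal_eq_one μ
    (NNReal.coe_ne_zero.mp (pow_ne_zero 2 hσ.ne'))

lemma exp_mul_exp_key (c a b : ℝ) :
    (c * Real.exp a) * (c * Real.exp b) = (c * Real.exp ((a + b) / 2)) ^ 2 := by
  rw [mul_pow, sq (Real.exp _), ← Real.exp_add,
    show (a + b) / 2 + (a + b) / 2 = a + b by ring, mul_mul_mul_comm, ← Real.exp_add]
  ring

lemma sqrt_gdens_mul {σ : ℝ} (hσ : 0 < σ) (μ x : ℝ) :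
    Real.sqrt (gdens 0 σ x * gdens μ σ x)
      = Real.exp (-μ ^ 2 / (8 * σ ^ 2)) * gdens (μ / 2) σ x := by
  have h1 : gdens 0 σ x * gdens μ σ x
      = ((σ * Real.sqrt (2 * π))⁻¹ *
          Real.exp ((-(x - 0) ^ 2 / (2 * σ ^ 2) + -(x - μ) ^ 2 / (2 * σ ^ 2)) / 2)) ^ 2 :=
    exp_mul_exp_key _ _ _
  rw [h1, Real.sqrt_sq (by positivity)]
  unfold gdens
  rw [mul_left_comm (Real.exp (-μ ^ 2 / (8 * σ ^ 2))), ← Real.exp_add]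
  congr 1
  field_simp
  ring

lemma continuous_gdens (μ σ : ℝ) : Continuous (gdens μ σ) := by
  unfold gdens
  fun_prop

lemma abs_sq_sub_sq (u v : ℝ) (hv : 0 ≤ v) (hu : 0 ≤ u) :
    |u ^ 2 - v ^ 2| = |u - v| * (u + v) := by
  rw [sq_sub_sq, abs_mul, abs_of_nonneg (by positivity : (0:ℝ) ≤ u + v)]
  ring

lemma sq_sub_le_abs_mul (u v : ℝ) (hu : 0 ≤ u) (hv : 0 ≤ v) :
    (u - v) ^ 2 ≤ |u - v| * (u + v) := by
  rcases le_total v u with h | h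
  · rw [abs_of_nonneg (by linarith)]; nlinarith
  · rw [abs_of_nonpos (by linarith)]; nlinarith

end aux

/-- Two-sided Hellinger-based bound on the total variation distance between
`N(0,σ²)` and `N(μ,σ²)`, and its consequence: along any sequence `σ_k → 0` with
`μ_k = σ_k √(-8 log(1-ε²))`, the total variation distance stays in `[ε², √2·ε]`. -/
theorem stmt_13 (ε : ℝ) (hε : ε ∈ Set.Ioo (0:ℝ) 1) :
    (∀ σ μ : ℝ, 0 < σ →
      (1 - Real.exp (-μ ^ 2 / (8 * σ ^ 2))
          ≤ (1 / 2) * ∫ x : ℝ, |gdens 0 σ x - gdens μ σ x|)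
        ∧ (1 / 2) * (∫ x : ℝ, |gdens 0 σ x - gdens μ σ x|)
          ≤ Real.sqrt 2 * Real.sqrt (1 - Real.exp (-μ ^ 2 / (8 * σ ^ 2))))
    ∧ (∀ σs : ℕ → ℝ, (∀ k, 0 < σs k) →
        Filter.Tendsto σs Filter.atTop (nhds 0) →
        ∀ k, (1 / 2) * (∫ x : ℝ,
            |gdens 0 (σs k) x
              - gdens (σs k * Real.sqrt (-8 * Real.log (1 - ε ^ 2))) (σs k) x|)
          ∈ Set.Icc (ε ^ 2) (Real.sqrt 2 * ε)) := by
  have main : ∀ σ μ : ℝ, 0 < σ →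
      (1 - Real.exp (-μ ^ 2 / (8 * σ ^ 2))
          ≤ (1 / 2) * ∫ x : ℝ, |gdens 0 σ x - gdens μ σ x|)
        ∧ (1 / 2) * (∫ x : ℝ, |gdens 0 σ x - gdens μ σ x|)
          ≤ Real.sqrt 2 * Real.sqrt (1 - Real.exp (-μ ^ 2 / (8 * σ ^ 2))) := by
    intro σ μ hσ
    set r : ℝ := Real.exp (-μ ^ 2 / (8 * σ ^ 2)) with hr
    have hr_pos : 0 < r := Real.exp_pos _
    have hr_le : r ≤ 1 := Real.exp_le_one_iff.mpr
      (div_nonpos_iff.mpr (Or.inr ⟨neg_nonpos.mpr (sq_nonneg μ), by positivity⟩))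
    set f : ℝ → ℝ := gdens 0 σ with hf
    set g : ℝ → ℝ := gdens μ σ with hg
    have hfpos : ∀ x, 0 < f x := gdens_pos hσ 0
    have hgpos : ∀ x, 0 < g x := gdens_pos hσ μ
    have hif : Integrable f := integrable_gdens hσ 0
    have hig : Integrable g := integrable_gdens hσ μ
    have hsqrt_eq : ∀ x, Real.sqrt (f x * g x) = r * gdens (μ / 2) σ x :=
      fun x => sqrt_gdens_mul hσ μ x
    have hisq : Integrable (fun x => Real.sqrt (f x * g x)) := by
      simp only [hsqrt_eq]
      exact (integrable_gdens hσ (μ / 2)).const_mul r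
    have hInt_sqrt : ∫ x : ℝ, Real.sqrt (f x * g x) = r := by
      simp only [hsqrt_eq]
      rw [integral_const_mul, integral_gdens hσ, mul_one]
    have hsq_eq : ∀ x : ℝ, (Real.sqrt (f x) - Real.sqrt (g x)) ^ 2
        = f x + g x - 2 * Real.sqrt (f x * g x) := by
      intro x
      rw [sub_sq, Real.sq_sqrt (hfpos x).le, Real.sq_sqrt (hgpos x).le,
        Real.sqrt_mul (hfpos x).le (g x)]
      ring
    have hiadd : Integrable (fun x => f x + g x) := hif.add hig
    have hi_sq : Integrable (fun x => (Real.sqrt (f x) - Real.sqrt (g x)) ^ 2) := by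
      simp only [hsq_eq]
      exact hiadd.sub (hisq.const_mul 2)
    have hInt_sq : ∫ x : ℝ, (Real.sqrt (f x) - Real.sqrt (g x)) ^ 2 = 2 - 2 * r := by
      simp only [hsq_eq]
      rw [integral_sub hiadd (hisq.const_mul 2), integral_add hif hig,
        integral_const_mul, hInt_sqrt]
      have h1 : ∫ x : ℝ, f x = 1 := integral_gdens hσ 0
      have h2 : ∫ x : ℝ, g x = 1 := integral_gdens hσ μ
      rw [h1, h2]; ring
    have hi_abs : Integrable (fun x => |f x - g x|) := (hif.sub hig).abs
    have habs_eq : ∀ x : ℝ, |f x - g x|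
        = |Real.sqrt (f x) - Real.sqrt (g x)| * (Real.sqrt (f x) + Real.sqrt (g x)) := by
      intro x
      have := abs_sq_sub_sq (Real.sqrt (f x)) (Real.sqrt (g x))
        (Real.sqrt_nonneg _) (Real.sqrt_nonneg _)
      rwa [Real.sq_sqrt (hfpos x).le, Real.sq_sqrt (hgpos x).le] at this
    have hlow_pt : ∀ x : ℝ, (Real.sqrt (f x) - Real.sqrt (g x)) ^ 2 ≤ |f x - g x| := by
      intro x
      rw [habs_eq x]
      exact sq_sub_le_abs_mul _ _ (Real.sqrt_nonneg _) (Real.sqrt_nonneg _)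
    have hlow : 2 - 2 * r ≤ ∫ x : ℝ, |f x - g x| := by
      rw [← hInt_sq]
      exact integral_mono hi_sq hi_abs hlow_pt
    refine ⟨by linarith, ?_⟩
    -- upper bound via Cauchy–Schwarz
    have hcontf : Continuous f := continuous_gdens 0 σ
    have hcontg : Continuous g := continuous_gdens μ σ
    have hcontu : Continuous (fun x => |Real.sqrt (f x) - Real.sqrt (g x)|) := by
      fun_prop
    have hcontv : Continuous (fun x => Real.sqrt (f x) + Real.sqrt (g x)) := by
      fun_prop
    have hiu2 : Integrable (fun x => |Real.sqrt (f x) - Real.sqrt (g x)| ^ 2) := by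
      simp only [sq_abs]
      exact hi_sq
    have hiv2 : Integrable (fun x => (Real.sqrt (f x) + Real.sqrt (g x)) ^ 2) := by
      have heq : ∀ x : ℝ, (Real.sqrt (f x) + Real.sqrt (g x)) ^ 2
          = f x + g x + 2 * Real.sqrt (f x * g x) := by
        intro x
        rw [add_sq, Real.sq_sqrt (hfpos x).le, Real.sq_sqrt (hgpos x).le,
          Real.sqrt_mul (hfpos x).le (g x)]
        ring
      simp only [heq]
      exact hiadd.add (hisq.const_mul 2)
    have hInt_v2 : ∫ x : ℝ, (Real.sqrt (f x) + Real.sqrt (g x)) ^ 2 = 2 + 2 * r := by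
      have heq : ∀ x : ℝ, (Real.sqrt (f x) + Real.sqrt (g x)) ^ 2
          = f x + g x + 2 * Real.sqrt (f x * g x) := by
        intro x
        rw [add_sq, Real.sq_sqrt (hfpos x).le, Real.sq_sqrt (hgpos x).le,
          Real.sqrt_mul (hfpos x).le (g x)]
        ring
      simp only [heq]
      rw [integral_add hiadd (hisq.const_mul 2), integral_add hif hig,
        integral_const_mul, hInt_sqrt]
      have h1 : ∫ x : ℝ, f x = 1 := integral_gdens hσ 0
      have h2 : ∫ x : ℝ, g x = 1 := integral_gdens hσ μ
      rw [h1, h2]; ring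
    have hmu : MemLp (fun x => |Real.sqrt (f x) - Real.sqrt (g x)|) (ENNReal.ofReal 2) := by
      rw [show ENNReal.ofReal 2 = 2 by norm_num]
      exact (memLp_two_iff_integrable_sq hcontu.aestronglyMeasurable).mpr hiu2
    have hmv : MemLp (fun x => Real.sqrt (f x) + Real.sqrt (g x)) (ENNReal.ofReal 2) := by
      rw [show ENNReal.ofReal 2 = 2 by norm_num]
      exact (memLp_two_iff_integrable_sq hcontv.aestronglyMeasurable).mpr hiv2
    have hCS := integral_mul_le_Lp_mul_Lq_of_nonneg
      (Real.HolderConjugate.two_two : Real.HolderConjugate 2 2)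
      (ae_of_all _ fun x => abs_nonneg _)
      (ae_of_all _ fun x => by positivity) hmu hmv
    simp only [show ((2:ℝ)) = ((2:ℕ):ℝ) from by norm_num, Real.rpow_natCast] at hCS
    rw [show (1 / ((2:ℕ):ℝ)) = (1/2 : ℝ) by norm_num, ← Real.sqrt_eq_rpow,
      ← Real.sqrt_eq_rpow] at hCS
    rw [hInt_v2] at hCS
    have hiu2' : ∫ x : ℝ, |Real.sqrt (f x) - Real.sqrt (g x)| ^ 2 = 2 - 2 * r := by
      simp only [sq_abs]; exact hInt_sq
    rw [hiu2'] at hCS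
    have hv2le : Real.sqrt (2 + 2 * r) ≤ 2 := by
      have h4 : Real.sqrt 4 = 2 := by
        rw [show (4:ℝ) = 2 ^ 2 by norm_num, Real.sqrt_sq (by norm_num : (0:ℝ) ≤ 2)]
      calc Real.sqrt (2 + 2 * r) ≤ Real.sqrt 4 := Real.sqrt_le_sqrt (by linarith)
        _ = 2 := h4
    have habs_int : ∫ x : ℝ, |f x - g x|
        = ∫ x : ℝ, |Real.sqrt (f x) - Real.sqrt (g x)| * (Real.sqrt (f x) + Real.sqrt (g x)) := by
      exact integral_congr_ae (ae_of_all _ habs_eq)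
    have hup : ∫ x : ℝ, |f x - g x| ≤ Real.sqrt (2 - 2 * r) * 2 := by
      rw [habs_int]
      calc _ ≤ Real.sqrt (2 - 2 * r) * Real.sqrt (2 + 2 * r) := hCS
        _ ≤ Real.sqrt (2 - 2 * r) * 2 :=
            mul_le_mul_of_nonneg_left hv2le (Real.sqrt_nonneg _)
    have hfin : Real.sqrt (2 - 2 * r) = Real.sqrt 2 * Real.sqrt (1 - r) := by
      rw [show (2:ℝ) - 2 * r = 2 * (1 - r) by ring,
        Real.sqrt_mul (by norm_num : (0:ℝ) ≤ 2)]
    calc (1 / 2) * ∫ x : ℝ, |f x - g x| ≤ (1 / 2) * (Real.sqrt (2 - 2 * r) * 2) := by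
          linarith
      _ = Real.sqrt 2 * Real.sqrt (1 - r) := by rw [hfin]; ring
  refine ⟨main, ?_⟩
  intro σs hσs _ k
  obtain ⟨hε0, hε1⟩ := hε
  have h1 : (0:ℝ) < 1 - ε ^ 2 := by nlinarith
  have hL : (0:ℝ) ≤ -8 * Real.log (1 - ε ^ 2) := by
    have : Real.log (1 - ε ^ 2) ≤ 0 := Real.log_nonpos h1.le (by nlinarith)
    linarith
  set σ := σs k
  have hσ : 0 < σ := hσs k
  set μ := σ * Real.sqrt (-8 * Real.log (1 - ε ^ 2)) with hμ
  have hexp : Real.exp (-μ ^ 2 / (8 * σ ^ 2)) = 1 - ε ^ 2 := by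
    have hμ2 : μ ^ 2 = σ ^ 2 * (-8 * Real.log (1 - ε ^ 2)) := by
      rw [hμ, mul_pow, Real.sq_sqrt hL]
    rw [hμ2, show -(σ ^ 2 * (-8 * Real.log (1 - ε ^ 2))) / (8 * σ ^ 2)
        = Real.log (1 - ε ^ 2) by field_simp]
    exact Real.exp_log h1
  obtain ⟨l, u⟩ := main σ μ hσ
  rw [hexp] at l u
  constructor
  · simpa using l
  · calc (1 / 2) * (∫ x : ℝ, |gdens 0 σ x - gdens μ σ x|)
        ≤ Real.sqrt 2 * Real.sqrt (1 - (1 - ε ^ 2)) := u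
      _ = Real.sqrt 2 * ε := by
          rw [show 1 - (1 - ε ^ 2) = ε ^ 2 by ring, Real.sqrt_sq hε0.le]
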